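/- Truthful reporting of client schedules is weakly dominant: misreporting shrinks the admissible set and lowers joint profit pointwise. Precisely, A(f̂) ⊆ A(rc), and for every T ∈ A(f̂), (h T − f̂ T) · T ≤ (h T − rc T) · T; consequently V(f̂) ≤ V(rc), where V(f) := 0 if A(f) is empty and V(f) := max over T ∈ A(f) of (h T − f T) · T otherwise. Symmetrically, if a report ĝ : 𝒯 → ℝ satisfies ĝ T ≤ rc' T for all T ∈ 𝒯 (the borrower-side client rationality constraint, with rc' the borrower-side reservation schedule and the admissible set defined by (1/2) · (g T − f T) ≥ κ for the lender-side report f), then the corresponding admissible set and maximal joint profit under ĝ are weakly below those under rc'. -/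

import Mathlib

/-!
Both halves are instances of one fact about the margin `h - f`: if it increases pointwise on
the grid, the hurdle set grows and, volumes being nonnegative, so does the profit at each
admissible volume. A maximum over a larger finite set of larger values is larger, and the
default value `0` for an empty admissible set lies below every admissible profit because
`κ ≥ 0` forces a nonnegative margin there.
-/

open Set Classical

/-- The admissible (hurdle-feasible) set of volumes for a lender-side report `f`
against the counterparty schedule `h`. -/
def admissible (grid : Finset ℝ) (κ : ℝ) (h f : ℝ → ℝ) : Set ℝ :=
  {T | T ∈ grid ∧ κ ≤ (1 / 2) * (h T - f T)}

/-- Maximal joint profit attainable under report `f`: `0` if the admissible set is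
empty, otherwise the maximum of `(h T − f T) · T` over the admissible set. -/
noncomputable def maxProfit (grid : Finset ℝ) (κ : ℝ) (h f : ℝ → ℝ) : ℝ :=
  if (admissible grid κ h f).Nonempty then
    sSup ((fun T => (h T - f T) * T) '' admissible grid κ h f)
  else 0

section Admissible

variable {grid : Finset ℝ} {κ : ℝ} {h f h' f' : ℝ → ℝ}

lemma admissible_finite : (admissible grid κ h f).Finite :=
  grid.finite_toSet.subset fun _ hT => hT.1

lemma admissible_subset_of_margin_le (hle : ∀ T ∈ grid, h T - f T ≤ h' T - f' T) :
    admissible grid κ h f ⊆ admissible grid κ h' f' :=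
  fun T ⟨hT, hκT⟩ => ⟨hT, hκT.trans (by linarith [hle T hT])⟩

lemma profit_nonneg_of_mem_admissible (hκ : 0 ≤ κ) (hpos : ∀ T ∈ grid, 0 ≤ T) {T : ℝ}
    (hT : T ∈ admissible grid κ h f) : 0 ≤ (h T - f T) * T :=
  mul_nonneg (by linarith [hT.2]) (hpos T hT.1)

lemma le_maxProfit {T : ℝ} (hT : T ∈ admissible grid κ h f) :
    (h T - f T) * T ≤ maxProfit grid κ h f := by
  rw [maxProfit, if_pos ⟨T, hT⟩]
  exact le_csSup (admissible_finite.image _).bddAbove (mem_image_of_mem _ hT)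

lemma maxProfit_nonneg (hκ : 0 ≤ κ) (hpos : ∀ T ∈ grid, 0 ≤ T) : 0 ≤ maxProfit grid κ h f := by
  by_cases hA : (admissible grid κ h f).Nonempty
  · obtain ⟨T, hT⟩ := hA
    exact (profit_nonneg_of_mem_admissible hκ hpos hT).trans (le_maxProfit hT)
  · rw [maxProfit, if_neg hA]

lemma maxProfit_le_of_margin_le (hκ : 0 ≤ κ) (hpos : ∀ T ∈ grid, 0 ≤ T)
    (hle : ∀ T ∈ grid, h T - f T ≤ h' T - f' T) :
    maxProfit grid κ h f ≤ maxProfit grid κ h' f' := by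
  by_cases hA : (admissible grid κ h f).Nonempty
  · rw [maxProfit, if_pos hA]
    refine csSup_le (hA.image _) ?_
    rintro _ ⟨T, hT, rfl⟩
    calc (h T - f T) * T ≤ (h' T - f' T) * T :=
          mul_le_mul_of_nonneg_right (hle T hT.1) (hpos T hT.1)
      _ ≤ maxProfit grid κ h' f' := le_maxProfit (admissible_subset_of_margin_le hle hT)
  · rw [maxProfit, if_neg hA]
    exact maxProfit_nonneg hκ hpos

lemma weakly_dominant_of_margin_le (hκ : 0 ≤ κ) (hpos : ∀ T ∈ grid, 0 ≤ T)
    (hle : ∀ T ∈ grid, h T - f T ≤ h' T - f' T) :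
    admissible grid κ h f ⊆ admissible grid κ h' f' ∧
      (∀ T ∈ admissible grid κ h f, (h T - f T) * T ≤ (h' T - f' T) * T) ∧
      maxProfit grid κ h f ≤ maxProfit grid κ h' f' :=
  ⟨admissible_subset_of_margin_le hle,
    fun T hT => mul_le_mul_of_nonneg_right (hle T hT.1) (hpos T hT.1),
    maxProfit_le_of_margin_le hκ hpos hle⟩

end Admissible

theorem truthful_reporting_weakly_dominant_general
    (grid : Finset ℝ)
    (hpos : ∀ T ∈ grid, (0:ℝ) ≤ T)
    (κ : ℝ) (hκ : 0 ≤ κ)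
    (h rc fhat : ℝ → ℝ)
    (hrat : ∀ T ∈ grid, rc T ≤ fhat T)
    (f rc' ghat : ℝ → ℝ)
    (hrat' : ∀ T ∈ grid, ghat T ≤ rc' T) :
    (admissible grid κ h fhat ⊆ admissible grid κ h rc ∧
      (∀ T ∈ admissible grid κ h fhat, (h T - fhat T) * T ≤ (h T - rc T) * T) ∧
      maxProfit grid κ h fhat ≤ maxProfit grid κ h rc) ∧
    ({T | T ∈ grid ∧ κ ≤ (1 / 2) * (ghat T - f T)} ⊆
        {T | T ∈ grid ∧ κ ≤ (1 / 2) * (rc' T - f T)} ∧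
      (∀ T ∈ {T | T ∈ grid ∧ κ ≤ (1 / 2) * (ghat T - f T)},
        (ghat T - f T) * T ≤ (rc' T - f T) * T) ∧
      (if ({T | T ∈ grid ∧ κ ≤ (1 / 2) * (ghat T - f T)} : Set ℝ).Nonempty then
          sSup ((fun T => (ghat T - f T) * T) ''
            {T | T ∈ grid ∧ κ ≤ (1 / 2) * (ghat T - f T)})
        else 0) ≤
      (if ({T | T ∈ grid ∧ κ ≤ (1 / 2) * (rc' T - f T)} : Set ℝ).Nonempty then
          sSup ((fun T => (rc' T - f T) * T) ''
            {T | T ∈ grid ∧ κ ≤ (1 / 2) * (rc' T - f T)})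
        else 0)) := by
  have lender : ∀ T ∈ grid, h T - fhat T ≤ h T - rc T :=
    fun T hT => sub_le_sub_left (hrat T hT) _
  have borrower : ∀ T ∈ grid, ghat T - f T ≤ rc' T - f T :=
    fun T hT => sub_le_sub_right (hrat' T hT) _
  -- The borrower side is the lender-side statement with `ghat`, `rc'` in the role of `h`.
  exact ⟨weakly_dominant_of_margin_le hκ hpos lender,
    weakly_dominant_of_margin_le hκ hpos borrower⟩

/-- Truthful reporting of client schedules is weakly dominant: misreporting shrinks the
admissible set and lowers joint profit pointwise, hence lowers the maximal joint profit;
symmetrically on the borrower side. -/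
theorem truthful_reporting_weakly_dominant
    (grid : Finset ℝ) (hgrid : grid.Nonempty)
    (hpos : ∀ T ∈ grid, (0:ℝ) ≤ T)
    (κ : ℝ) (hκ : 0 ≤ κ)
    (h rc fhat : ℝ → ℝ)
    (hrat : ∀ T ∈ grid, rc T ≤ fhat T)
    (f rc' ghat : ℝ → ℝ)
    (hrat' : ∀ T ∈ grid, ghat T ≤ rc' T) :
    (admissible grid κ h fhat ⊆ admissible grid κ h rc ∧
      (∀ T ∈ admissible grid κ h fhat, (h T - fhat T) * T ≤ (h T - rc T) * T) ∧
      maxProfit grid κ h fhat ≤ maxProfit grid κ h rc) ∧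
    ({T | T ∈ grid ∧ κ ≤ (1 / 2) * (ghat T - f T)} ⊆
        {T | T ∈ grid ∧ κ ≤ (1 / 2) * (rc' T - f T)} ∧
      (∀ T ∈ {T | T ∈ grid ∧ κ ≤ (1 / 2) * (ghat T - f T)},
        (ghat T - f T) * T ≤ (rc' T - f T) * T) ∧
      (if ({T | T ∈ grid ∧ κ ≤ (1 / 2) * (ghat T - f T)} : Set ℝ).Nonempty then
          sSup ((fun T => (ghat T - f T) * T) ''
            {T | T ∈ grid ∧ κ ≤ (1 / 2) * (ghat T - f T)})
        else 0) ≤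
      (if ({T | T ∈ grid ∧ κ ≤ (1 / 2) * (rc' T - f T)} : Set ℝ).Nonempty then
          sSup ((fun T => (rc' T - f T) * T) ''
            {T | T ∈ grid ∧ κ ≤ (1 / 2) * (rc' T - f T)})
        else 0)) :=
  truthful_reporting_weakly_dominant_general grid hpos κ hκ h rc fhat hrat f rc' ghat hrat'
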